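/- arXiv:1509.04160 — 3 statements merged into one kernel-verified Lean document; each statement's English description precedes it below -/
import Mathlib

section
/- Let W ⊂ H be a closed subspace, A ∈ B(H) boundedly invertible, and λ > 0. Then the operator R(λ) := A P_W + λ A^{-*} P_{W^⊥} is boundedly invertible and the orthogonal projection onto AW satisfies P_{AW} = R(λ)^{-*} P_W A^*. -/
/-!
`R(λ)` maps `W` onto `AW` and `Wᗮ` onto `A^{-*} Wᗮ = (AW)ᗮ`, so it is inverted by the operator of
the same shape built from `A⁻¹`, `AW` and `λ⁻¹`. Its adjoint is `P_W A^* + λ̄ P_{Wᗮ} A⁻¹`; on `AW`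
the second term vanishes, and `P_W A^*` does not see `(AW)ᗮ` because `A^*` maps it into `Wᗮ`.
Hence `R(λ)^* P_{AW} = P_W A^*`, and applying `R(λ)^{-*}` gives the formula for `P_{AW}`.
-/

open ContinuousLinearMap

noncomputable def proj {H : Type*} [NormedAddCommGroup H] [InnerProductSpace ℂ H]
    (W : Submodule ℂ H) [CompleteSpace W] : H →L[ℂ] H :=
  W.subtypeL.comp W.orthogonalProjectionOnto

section Projection

variable {H : Type*} [NormedAddCommGroup H] [InnerProductSpace ℂ H]

lemma proj_apply_mem (K : Submodule ℂ H) [CompleteSpace K] (x : H) : proj K x ∈ K :=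
  K.starProjection_apply_mem x

lemma proj_add_of_mem_orthogonal {K : Submodule ℂ H} [CompleteSpace K] {u v : H} (hu : u ∈ K)
    (hv : v ∈ Kᗮ) : proj K (u + v) = u :=
  K.eq_starProjection_of_mem_orthogonal' hu hv rfl

lemma proj_apply_eq_zero_of_mem_orthogonal {K : Submodule ℂ H} [CompleteSpace K] {v : H}
    (hv : v ∈ Kᗮ) : proj K v = 0 :=
  K.starProjection_apply_eq_zero_iff.mpr hv

variable [CompleteSpace H]

lemma proj_orthogonal_add_of_mem_orthogonal {K : Submodule ℂ H} [CompleteSpace K] {u v : H}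
    (hu : u ∈ K) (hv : v ∈ Kᗮ) : proj Kᗮ (u + v) = v := by
  rw [add_comm]
  exact proj_add_of_mem_orthogonal hv (K.le_orthogonal_orthogonal hu)

lemma proj_add_proj_orthogonal (K : Submodule ℂ H) [CompleteSpace K] (x : H) :
    proj K x + proj Kᗮ x = x :=
  K.starProjection_add_starProjection_orthogonal x

lemma adjoint_proj (K : Submodule ℂ H) [CompleteSpace K] : adjoint (proj K) = proj K :=
  (isSelfAdjoint_starProjection K).adjoint_eq

end Projection

section Adjoint

variable {𝕜 E F : Type*} [RCLike 𝕜] [NormedAddCommGroup E] [InnerProductSpace 𝕜 E]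
  [NormedAddCommGroup F] [InnerProductSpace 𝕜 F]

lemma ContinuousLinearEquiv.symm_mem_of_mem_map (e : E ≃L[𝕜] F) {W : Submodule 𝕜 E} {y : F}
    (hy : y ∈ W.map ((e : E →L[𝕜] F) : E →ₗ[𝕜] F)) : e.symm y ∈ W := by
  obtain ⟨w, hw, rfl⟩ := hy
  simpa using hw

variable [CompleteSpace E] [CompleteSpace F]

lemma adjoint_symm_comp_adjoint (e : E ≃L[𝕜] F) :
    adjoint (e.symm : F →L[𝕜] E) ∘L adjoint (e : E →L[𝕜] F) = ContinuousLinearMap.id 𝕜 F := by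
  rw [← adjoint_comp, e.coe_comp_coe_symm, adjoint_id]

lemma adjoint_mem_orthogonal_of_mem_orthogonal_map (T : E →L[𝕜] F) {W : Submodule 𝕜 E} {y : F}
    (hy : y ∈ (W.map (T : E →ₗ[𝕜] F))ᗮ) : adjoint T y ∈ Wᗮ := by
  intro w hw
  rw [adjoint_inner_right]
  exact hy (T w) (Submodule.mem_map_of_mem hw)

lemma adjoint_symm_mem_orthogonal_map (e : E ≃L[𝕜] F) {W : Submodule 𝕜 E} {z : E}
    (hz : z ∈ Wᗮ) :
    adjoint (e.symm : F →L[𝕜] E) z ∈ (W.map ((e : E →L[𝕜] F) : E →ₗ[𝕜] F))ᗮ := by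
  rintro _ ⟨w, hw, rfl⟩
  rw [adjoint_inner_right]
  simpa using hz w hw

end Adjoint

section SplitOperator

variable {E F : Type*} [NormedAddCommGroup E] [InnerProductSpace ℂ E] [CompleteSpace E]
  [NormedAddCommGroup F] [InnerProductSpace ℂ F] [CompleteSpace F]

noncomputable def splitOperator (A : E ≃L[ℂ] F) (W : Submodule ℂ E) [CompleteSpace W] (c : ℂ) :
    E →L[ℂ] F :=
  (A : E →L[ℂ] F) ∘L proj W + c • adjoint (A.symm : F →L[ℂ] E) ∘L proj Wᗮ

lemma splitOperator_apply (A : E ≃L[ℂ] F) (W : Submodule ℂ E) [CompleteSpace W] (c : ℂ)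
    (x : E) :
    splitOperator A W c x = A (proj W x) + c • adjoint (A.symm : F →L[ℂ] E) (proj Wᗮ x) :=
  rfl

lemma splitOperator_leftInverse {A : E ≃L[ℂ] F} {W : Submodule ℂ E} {V : Submodule ℂ F}
    [CompleteSpace W] [CompleteSpace V] (hAW : ∀ w ∈ W, A w ∈ V)
    (hAW' : ∀ z ∈ Wᗮ, adjoint (A.symm : F →L[ℂ] E) z ∈ Vᗮ) {c : ℂ} (hc : c ≠ 0) :
    Function.LeftInverse (splitOperator A.symm V c⁻¹) (splitOperator A W c) := by
  intro x
  have hW : A (proj W x) ∈ V := hAW _ (proj_apply_mem W x)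
  have hW' : c • adjoint (A.symm : F →L[ℂ] E) (proj Wᗮ x) ∈ Vᗮ :=
    Vᗮ.smul_mem c (hAW' _ (proj_apply_mem Wᗮ x))
  rw [splitOperator_apply A.symm, splitOperator_apply, proj_add_of_mem_orthogonal hW hW',
    proj_orthogonal_add_of_mem_orthogonal hW hW', map_smul, ← comp_apply (adjoint _),
    adjoint_symm_comp_adjoint, id_apply, smul_smul, inv_mul_cancel₀ hc, one_smul,
    A.symm_apply_apply, proj_add_proj_orthogonal]

lemma splitOperator_rightInverse {A : E ≃L[ℂ] F} {W : Submodule ℂ E} {V : Submodule ℂ F}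
    [CompleteSpace W] [CompleteSpace V] (hAV : ∀ v ∈ V, A.symm v ∈ W)
    (hAV' : ∀ z ∈ Vᗮ, adjoint (A : E →L[ℂ] F) z ∈ Wᗮ) {c : ℂ} (hc : c ≠ 0) :
    Function.RightInverse (splitOperator A.symm V c⁻¹) (splitOperator A W c) := by
  have h := splitOperator_leftInverse (A := A.symm) hAV hAV' (inv_ne_zero hc)
  rw [inv_inv] at h
  exact h.rightInverse

variable (A : E ≃L[ℂ] F) (W : Submodule ℂ E) [CompleteSpace W] {c : ℂ}

noncomputable def splitOperatorEquiv [CompleteSpace (W.map ((A : E →L[ℂ] F) : E →ₗ[ℂ] F))]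
    (hc : c ≠ 0) : E ≃L[ℂ] F :=
  .equivOfInverse (splitOperator A W c)
    (splitOperator A.symm (W.map ((A : E →L[ℂ] F) : E →ₗ[ℂ] F)) c⁻¹)
    (splitOperator_leftInverse (V := W.map ((A : E →L[ℂ] F) : E →ₗ[ℂ] F))
      (fun _ ↦ Submodule.mem_map_of_mem)
      (fun _ ↦ adjoint_symm_mem_orthogonal_map A) hc)
    (splitOperator_rightInverse (fun _ ↦ A.symm_mem_of_mem_map)
      (fun _ ↦ adjoint_mem_orthogonal_of_mem_orthogonal_map _) hc)

lemma coe_splitOperatorEquiv [CompleteSpace (W.map ((A : E →L[ℂ] F) : E →ₗ[ℂ] F))]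
    (hc : c ≠ 0) : (splitOperatorEquiv A W hc : E →L[ℂ] F) = splitOperator A W c :=
  rfl

lemma adjoint_splitOperator :
    adjoint (splitOperator A W c) =
      _root_.proj W ∘L adjoint (A : E →L[ℂ] F) +
        starRingEnd ℂ c • _root_.proj Wᗮ ∘L (A.symm : F →L[ℂ] E) := by
  rw [splitOperator, map_add, map_smulₛₗ, adjoint_comp, adjoint_comp, adjoint_adjoint,
    adjoint_proj, adjoint_proj]

lemma adjoint_splitOperator_comp_proj {V : Submodule ℂ F} [CompleteSpace V]
    (hAV : ∀ v ∈ V, A.symm v ∈ W) (hAV' : ∀ z ∈ Vᗮ, adjoint (A : E →L[ℂ] F) z ∈ Wᗮ) :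
    adjoint (splitOperator A W c) ∘L proj V = _root_.proj W ∘L adjoint (A : E →L[ℂ] F) := by
  ext x
  have hsymm : proj Wᗮ (A.symm (proj V x)) = 0 :=
    proj_apply_eq_zero_of_mem_orthogonal
      (W.le_orthogonal_orthogonal (hAV _ (proj_apply_mem V x)))
  have hadj : proj W (adjoint (A : E →L[ℂ] F) (x - proj V x)) = 0 :=
    proj_apply_eq_zero_of_mem_orthogonal (hAV' _ (V.sub_starProjection_mem_orthogonal x))
  rw [map_sub, map_sub, sub_eq_zero] at hadj
  rw [comp_apply, adjoint_splitOperator, add_apply, smul_apply, comp_apply, comp_apply,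
    ContinuousLinearEquiv.coe_coe, hsymm, smul_zero, add_zero, comp_apply, hadj]

end SplitOperator

/-- For a closed subspace `W ⊂ H`, a boundedly invertible `A ∈ B(H)` and `λ > 0`, the
operator `R(λ) = A P_W + λ A^{-*} P_{Wᗮ}` is boundedly invertible and
`P_{AW} = R(λ)^{-*} P_W A*`. -/
theorem proj_map_eq {H : Type*} [NormedAddCommGroup H] [InnerProductSpace ℂ H]
    [CompleteSpace H] (W : Submodule ℂ H) [CompleteSpace W]
    (A : H ≃L[ℂ] H) [CompleteSpace (W.map ((A : H →L[ℂ] H) : H →ₗ[ℂ] H))] (lam : ℝ) (hlam : 0 < lam) :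
    ∃ R : H ≃L[ℂ] H,
      (R : H →L[ℂ] H) =
        (A : H →L[ℂ] H).comp (proj W) +
          (lam : ℂ) • (adjoint (A.symm : H →L[ℂ] H)).comp (proj Wᗮ) ∧
      proj (W.map ((A : H →L[ℂ] H) : H →ₗ[ℂ] H)) =
        (adjoint (R.symm : H →L[ℂ] H)).comp ((proj W).comp (adjoint (A : H →L[ℂ] H))) := by
  have hlam₀ : (lam : ℂ) ≠ 0 := Complex.ofReal_ne_zero.mpr hlam.ne'
  refine ⟨splitOperatorEquiv A W hlam₀, rfl, ?_⟩
  have hadjoint := adjoint_splitOperator_comp_proj A W (c := lam)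
    (fun _ ↦ A.symm_mem_of_mem_map) (fun _ ↦ adjoint_mem_orthogonal_of_mem_orthogonal_map _)
  rw [← hadjoint, ← coe_splitOperatorEquiv A W hlam₀, ← comp_assoc, adjoint_symm_comp_adjoint,
    id_comp]
end

section
/- Let A be a B(H,K)-valued frame sequence with lower frame bound α and B a B(H,K)-valued Bessel sequence. Then the gap from H_A to H_B satisfies δ(H_A, H_B) ≤ ‖T_A - T_B‖/√α, and also δ(ran T_A, cl(ran T_B)) ≤ ‖T_A - T_B‖/√α. -/
open ContinuousLinearMap

/-- The gap `δ(V,W) = ‖P_{Wᗮ}|V‖` from `V` to `W`. -/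
noncomputable def gap {H : Type*} [NormedAddCommGroup H] [InnerProductSpace ℂ H]
    [CompleteSpace H] (V W : Submodule ℂ H) : ℝ :=
  ‖(proj Wᗮ).comp V.subtypeL‖

/-!
Write `V_A` for the closure of `ran T_A*`; its orthogonal complement is `ker T_A`, so
`T_A x = T_A (P_{V_A} x)` and the lower frame bound gives `√α ‖P_{V_A} x‖ ≤ ‖T_A x‖`.
For the first gap, self-adjointness of projections reduces `‖P_{V_Bᗮ} P_{V_A}‖` to
`‖P_{V_A} P_{V_Bᗮ}‖`, and on `V_Bᗮ = ker T_B` we have `T_A z = (T_A - T_B) z`.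
For the second, `P_{(cl ran T_B)ᗮ} (T_A x) = P_{(cl ran T_B)ᗮ} ((T_A - T_B) (P_{V_A} x))`.
-/

section Projection

variable {𝕜 E F : Type*} [RCLike 𝕜] [NormedAddCommGroup E] [InnerProductSpace 𝕜 E]
  [NormedAddCommGroup F] [InnerProductSpace 𝕜 F]

/-- Since projections are self-adjoint, `‖P_U P_V‖ = ‖P_V P_U‖`; this is the pointwise form. -/
lemma Submodule.norm_starProjection_le_of_forall {U V : Submodule 𝕜 E}
    [U.HasOrthogonalProjection] [V.HasOrthogonalProjection] {c : ℝ} (hc : 0 ≤ c)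
    (h : ∀ z ∈ U, ‖V.starProjection z‖ ≤ c * ‖z‖) {x : E} (hx : x ∈ V) :
    ‖U.starProjection x‖ ≤ c * ‖x‖ := by
  set z := U.starProjection x
  have hz : ‖z‖ ^ 2 ≤ ‖z‖ * (c * ‖x‖) :=
    calc ‖z‖ ^ 2 = RCLike.re (inner 𝕜 z x) := (U.re_inner_starProjection_eq_normSq x).symm
      _ = RCLike.re (inner 𝕜 (V.starProjection z) x) := by
        rw [V.inner_starProjection_left_eq_right, Submodule.starProjection_eq_self_iff.2 hx]
      _ ≤ ‖V.starProjection z‖ * ‖x‖ := (RCLike.re_le_norm _).trans (norm_inner_le_norm _ _)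
      _ ≤ c * ‖z‖ * ‖x‖ := by gcongr; exact h z (U.starProjection_apply_mem x)
      _ = ‖z‖ * (c * ‖x‖) := by ring
  rcases (norm_nonneg z).eq_or_lt with hz0 | hz0
  · rw [← hz0]; positivity
  · exact le_of_mul_le_mul_left (by rwa [← sq]) hz0

lemma ContinuousLinearMap.apply_starProjection {V : Submodule 𝕜 E} [V.HasOrthogonalProjection]
    {T : E →L[𝕜] F} (hV : Vᗮ ≤ LinearMap.ker (T : E →ₗ[𝕜] F)) (x : E) :
    T (V.starProjection x) = T x := by
  rw [eq_comm, ← sub_eq_zero, ← map_sub]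
  exact hV (V.sub_starProjection_mem_orthogonal x)

lemma ContinuousLinearMap.norm_starProjection_le_div {V : Submodule 𝕜 E}
    [V.HasOrthogonalProjection] {T : E →L[𝕜] F} (hV : Vᗮ ≤ LinearMap.ker (T : E →ₗ[𝕜] F))
    {β : ℝ} (hβ : 0 < β) (hbound : ∀ v ∈ V, β * ‖v‖ ≤ ‖T v‖) (x : E) :
    ‖V.starProjection x‖ ≤ ‖T x‖ / β := by
  rw [le_div_iff₀' hβ, ← T.apply_starProjection hV x]
  exact hbound _ (V.starProjection_apply_mem x)

lemma ContinuousLinearMap.orthogonal_closure_range_adjoint [CompleteSpace E] [CompleteSpace F]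
    (T : E →L[𝕜] F) :
    (LinearMap.range (adjoint T : F →ₗ[𝕜] E)).topologicalClosureᗮ =
      LinearMap.ker (T : E →ₗ[𝕜] F) := by
  rw [Submodule.orthogonal_closure, orthogonal_range, adjoint_adjoint]

end Projection

section Gap

variable {H E : Type*} [NormedAddCommGroup H] [InnerProductSpace ℂ H] [CompleteSpace H]
  [NormedAddCommGroup E] [InnerProductSpace ℂ E] [CompleteSpace E]

lemma gap_le_of_forall_mem {V W : Submodule ℂ H} {c : ℝ} (hc : 0 ≤ c)
    (h : ∀ x ∈ V, ‖Wᗮ.starProjection x‖ ≤ c * ‖x‖) : gap V W ≤ c :=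
  opNorm_le_bound _ hc fun x => h x x.2

lemma gap_le_of_forall_mem_orthogonal {V W : Submodule ℂ H} [V.HasOrthogonalProjection]
    {c : ℝ} (hc : 0 ≤ c) (h : ∀ z ∈ Wᗮ, ‖V.starProjection z‖ ≤ c * ‖z‖) : gap V W ≤ c :=
  gap_le_of_forall_mem hc fun _ hx => Submodule.norm_starProjection_le_of_forall hc h hx

lemma gap_closure_range_adjoint_le (S T : H →L[ℂ] E) {β : ℝ} (hβ : 0 < β)
    (hbound : ∀ v ∈ (LinearMap.range (adjoint S : E →ₗ[ℂ] H)).topologicalClosure,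
      β * ‖v‖ ≤ ‖S v‖) :
    gap (LinearMap.range (adjoint S : E →ₗ[ℂ] H)).topologicalClosure
      (LinearMap.range (adjoint T : E →ₗ[ℂ] H)).topologicalClosure ≤ ‖S - T‖ / β := by
  refine gap_le_of_forall_mem_orthogonal (by positivity) fun z hz => ?_
  rw [T.orthogonal_closure_range_adjoint] at hz
  calc _ ≤ ‖S z‖ / β :=
        S.norm_starProjection_le_div S.orthogonal_closure_range_adjoint.le hβ hbound z
    _ = ‖(S - T) z‖ / β := by rw [sub_apply, show T z = 0 from hz, sub_zero]
    _ ≤ ‖S - T‖ * ‖z‖ / β := by gcongr; exact le_opNorm _ _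
    _ = ‖S - T‖ / β * ‖z‖ := div_mul_eq_mul_div _ _ _ |>.symm

lemma gap_range_le (S T : H →L[ℂ] E) {β : ℝ} (hβ : 0 < β)
    (hbound : ∀ v ∈ (LinearMap.range (adjoint S : E →ₗ[ℂ] H)).topologicalClosure,
      β * ‖v‖ ≤ ‖S v‖) :
    gap (LinearMap.range (S : H →ₗ[ℂ] E))
      (LinearMap.range (T : H →ₗ[ℂ] E)).topologicalClosure ≤ ‖S - T‖ / β := by
  refine gap_le_of_forall_mem (by positivity) ?_
  rintro _ ⟨x, rfl⟩
  set V := (LinearMap.range (adjoint S : E →ₗ[ℂ] H)).topologicalClosure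
  set W := (LinearMap.range (T : H →ₗ[ℂ] E)).topologicalClosure
  have hV : Vᗮ ≤ LinearMap.ker (S : H →ₗ[ℂ] E) := S.orthogonal_closure_range_adjoint.le
  set w := V.starProjection x
  have hT : Wᗮ.starProjection (T w) = 0 :=
    Submodule.starProjection_orthogonal_apply_eq_zero
      (Submodule.le_topologicalClosure _ (LinearMap.mem_range_self _ w))
  calc ‖Wᗮ.starProjection (S x)‖ = ‖Wᗮ.starProjection ((S - T) w)‖ := by
        rw [← S.apply_starProjection hV x, sub_apply, map_sub, hT, sub_zero]
    _ ≤ ‖S - T‖ * ‖w‖ := (Wᗮ.norm_starProjection_apply_le _).trans (le_opNorm _ _)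
    _ ≤ ‖S - T‖ * (‖S x‖ / β) := by gcongr; exact S.norm_starProjection_le_div hV hβ hbound x
    _ = ‖S - T‖ / β * ‖S x‖ := by ring

end Gap

theorem gap_le_of_perturbation_general {H K : Type*}
    [NormedAddCommGroup H] [InnerProductSpace ℂ H] [CompleteSpace H]
    [NormedAddCommGroup K] [InnerProductSpace ℂ K] [CompleteSpace K]
    {I : Type*} (TA TB : H →L[ℂ] lp (fun _ : I => K) 2)
    (α : ℝ) (hα : 0 < α)
    (hframe : ∀ x ∈ (LinearMap.range ((adjoint TA : lp (fun _ : I => K) 2 →ₗ[ℂ] H))).topologicalClosure,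
      α * ‖x‖ ^ 2 ≤ ‖TA x‖ ^ 2) :
    gap (LinearMap.range ((adjoint TA : lp (fun _ : I => K) 2 →ₗ[ℂ] H))).topologicalClosure
        (LinearMap.range ((adjoint TB : lp (fun _ : I => K) 2 →ₗ[ℂ] H))).topologicalClosure ≤ ‖TA - TB‖ / Real.sqrt α ∧
    gap (LinearMap.range (TA : H →ₗ[ℂ] lp (fun _ : I => K) 2)) (LinearMap.range (TB : H →ₗ[ℂ] lp (fun _ : I => K) 2)).topologicalClosure ≤
      ‖TA - TB‖ / Real.sqrt α := by
  have hbound : ∀ x ∈ (LinearMap.range (adjoint TA : lp (fun _ : I => K) 2 →ₗ[ℂ] H))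
      |>.topologicalClosure, Real.sqrt α * ‖x‖ ≤ ‖TA x‖ := fun x hx => by
    simpa [Real.sqrt_mul' _ (sq_nonneg _)] using Real.sqrt_le_sqrt (hframe x hx)
  have hsqrt : 0 < Real.sqrt α := Real.sqrt_pos.2 hα
  exact ⟨gap_closure_range_adjoint_le TA TB hsqrt hbound, gap_range_le TA TB hsqrt hbound⟩

/-- If `A` is an operator-valued frame sequence with lower frame bound `α` (analysis
operator `T_A`) and `B` is an operator-valued Bessel sequence (analysis operator `T_B`),
then `δ(H_A, H_B) ≤ ‖T_A - T_B‖/√α` and `δ(ran T_A, cl ran T_B) ≤ ‖T_A - T_B‖/√α`. -/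
theorem gap_le_of_perturbation {H K : Type*}
    [NormedAddCommGroup H] [InnerProductSpace ℂ H] [CompleteSpace H]
    [NormedAddCommGroup K] [InnerProductSpace ℂ K] [CompleteSpace K]
    {I : Type*} [Countable I] (TA TB : H →L[ℂ] lp (fun _ : I => K) 2)
    (α : ℝ) (hα : 0 < α)
    (hframe : ∀ x ∈ (LinearMap.range ((adjoint TA : lp (fun _ : I => K) 2 →ₗ[ℂ] H))).topologicalClosure,
      α * ‖x‖ ^ 2 ≤ ‖TA x‖ ^ 2) :
    gap (LinearMap.range ((adjoint TA : lp (fun _ : I => K) 2 →ₗ[ℂ] H))).topologicalClosure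
        (LinearMap.range ((adjoint TB : lp (fun _ : I => K) 2 →ₗ[ℂ] H))).topologicalClosure ≤ ‖TA - TB‖ / Real.sqrt α ∧
    gap (LinearMap.range (TA : H →ₗ[ℂ] lp (fun _ : I => K) 2)) (LinearMap.range (TB : H →ₗ[ℂ] lp (fun _ : I => K) 2)).topologicalClosure ≤
      ‖TA - TB‖ / Real.sqrt α :=
  gap_le_of_perturbation_general TA TB α hα hframe
end

section
/- Let A be a B(H,K)-valued frame sequence with lower frame bound α and B a μ-perturbation of A (‖T_A - T_B‖ ≤ μ) with μ < √α and Δ(H_A, H_B) < 1. Then Δ(ran T_A, ran T_B) ≤ μ/(√α - μ). -/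
open ContinuousLinearMap

/-! Since `H_A = (ker T_A)ᗮ`, the operator `T_A` does not distinguish `x` from `P_{H_A} x`, and
likewise for `B`. As `δ(H_B, H_A) < 1`, the compression `P_{H_B} P_{H_A}` of `H_B` is within
distance `< 1` of the identity, hence invertible; so `P_{H_B}` maps `H_A` onto `H_B`, and every
vector of `ran T_B` is `T_B x` with `x ∈ H_A`. On `H_A` both `T_A` and `T_B` are bounded below by
`√α - μ`, so for `x ∈ H_A` each of `T_A x`, `T_B x` lies within `μ ‖x‖ ≤ μ / (√α - μ) ‖T_• x‖` of
the other range. -/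

theorem ContinuousLinearMap.sub_mul_norm_le_norm_apply {𝕜 E F : Type*} [NontriviallyNormedField 𝕜]
    [SeminormedAddCommGroup E] [SeminormedAddCommGroup F] [NormedSpace 𝕜 E] [NormedSpace 𝕜 F]
    {S T : E →L[𝕜] F} {c μ : ℝ} {x : E} (hx : c * ‖x‖ ≤ ‖S x‖) (hμ : ‖S - T‖ ≤ μ) :
    (c - μ) * ‖x‖ ≤ ‖T x‖ := by
  have hST : ‖S x - T x‖ ≤ μ * ‖x‖ := (S - T).le_of_opNorm_le hμ x
  have hreverse := norm_sub_norm_le (S x) (T x)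
  linarith

section

variable {E F : Type*} [NormedAddCommGroup E] [InnerProductSpace ℂ E] [CompleteSpace E]
  [NormedAddCommGroup F] [InnerProductSpace ℂ F]

theorem gap_le_of_forall_exists_norm_sub_le {V W : Submodule ℂ E} {c : ℝ} (hc : 0 ≤ c)
    (h : ∀ v ∈ V, ∃ w ∈ W, ‖v - w‖ ≤ c * ‖v‖) : gap V W ≤ c := by
  refine opNorm_le_bound _ hc fun ⟨v, hv⟩ => ?_
  obtain ⟨w, hw, hvw⟩ := h v hv
  have hw0 : Wᗮ.starProjection w = 0 :=
    Wᗮ.starProjection_apply_eq_zero_iff.mpr (W.le_orthogonal_orthogonal hw)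
  calc ‖Wᗮ.starProjection v‖ = ‖Wᗮ.starProjection (v - w)‖ := by rw [map_sub, hw0, sub_zero]
    _ ≤ ‖v - w‖ := Wᗮ.norm_starProjection_apply_le _
    _ ≤ c * ‖v‖ := hvw

theorem norm_one_sub_orthogonalProjectionOnto_comp_le_gap (V W : Submodule ℂ E)
    [V.HasOrthogonalProjection] [W.HasOrthogonalProjection] :
    ‖1 - V.orthogonalProjectionOnto ∘L W.starProjection ∘L V.subtypeL‖ ≤ gap V W := by
  refine opNorm_le_bound _ (norm_nonneg ((proj Wᗮ).comp V.subtypeL)) fun z => ?_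
  have hz : z - V.orthogonalProjectionOnto (W.starProjection z)
      = V.orthogonalProjectionOnto (Wᗮ.starProjection z) := by
    rw [Submodule.starProjection_orthogonal_val, map_sub,
      V.orthogonalProjectionOnto_mem_subspace_eq_self]
  calc ‖z - V.orthogonalProjectionOnto (W.starProjection z)‖
      = ‖V.orthogonalProjectionOnto (Wᗮ.starProjection z)‖ := by rw [hz]
    _ ≤ ‖Wᗮ.starProjection z‖ := V.norm_orthogonalProjectionOnto_apply_le _
    _ ≤ gap V W * ‖z‖ := ((proj Wᗮ).comp V.subtypeL).le_opNorm z

theorem exists_starProjection_eq_of_gap_lt_one {V W : Submodule ℂ E} [CompleteSpace V]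
    [W.HasOrthogonalProjection] (h : gap V W < 1) {z : E} (hz : z ∈ V) :
    ∃ w ∈ W, V.starProjection w = z := by
  obtain ⟨u, hu⟩ := isUnit_one_sub_of_norm_lt_one (R := V →L[ℂ] V)
    ((norm_one_sub_orthogonalProjectionOnto_comp_le_gap V W).trans_lt h)
  rw [sub_sub_cancel] at hu
  refine ⟨W.starProjection ((↑u⁻¹ : V →L[ℂ] V) ⟨z, hz⟩), Submodule.coe_mem _, ?_⟩
  have := congr($(u.mul_inv) ⟨z, hz⟩)
  rw [hu] at this
  exact congr(Subtype.val $this)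

namespace ContinuousLinearMap

variable (T : E →L[ℂ] F)

theorem orthogonal_orthogonal_ker :
    (LinearMap.ker (T : E →ₗ[ℂ] F))ᗮᗮ = LinearMap.ker (T : E →ₗ[ℂ] F) := by
  rw [Submodule.orthogonal_orthogonal_eq_closure, T.isClosed_ker.submodule_topologicalClosure_eq]

theorem apply_starProjection_orthogonal_ker (x : E) :
    T ((LinearMap.ker (T : E →ₗ[ℂ] F))ᗮ.starProjection x) = T x := by
  have hx := Submodule.sub_starProjection_mem_orthogonal (K := (LinearMap.ker (T : E →ₗ[ℂ] F))ᗮ) x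
  rw [orthogonal_orthogonal_ker, LinearMap.mem_ker, coe_coe, map_sub, sub_eq_zero] at hx
  exact hx.symm

theorem range_le_map_orthogonal_ker :
    LinearMap.range (T : E →ₗ[ℂ] F) ≤ (LinearMap.ker (T : E →ₗ[ℂ] F))ᗮ.map (T : E →ₗ[ℂ] F) := by
  rintro _ ⟨x, rfl⟩
  exact ⟨_, Submodule.coe_mem _, T.apply_starProjection_orthogonal_ker x⟩

theorem range_le_map_of_gap_lt_one {W : Submodule ℂ E} [W.HasOrthogonalProjection]
    (h : gap (LinearMap.ker (T : E →ₗ[ℂ] F))ᗮ W < 1) :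
    LinearMap.range (T : E →ₗ[ℂ] F) ≤ W.map (T : E →ₗ[ℂ] F) := by
  refine T.range_le_map_orthogonal_ker.trans ?_
  rintro _ ⟨z, hz, rfl⟩
  obtain ⟨w, hw, rfl⟩ := exists_starProjection_eq_of_gap_lt_one h hz
  exact ⟨w, hw, (T.apply_starProjection_orthogonal_ker w).symm⟩

end ContinuousLinearMap

theorem gap_range_le_div_of_norm_sub_le (S T : F →L[ℂ] E) {D : Submodule ℂ F}
    (hD : LinearMap.range (S : F →ₗ[ℂ] E) ≤ D.map (S : F →ₗ[ℂ] E)) {c μ : ℝ} (hc : 0 < c)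
    (hlow : ∀ x ∈ D, c * ‖x‖ ≤ ‖S x‖) (hμ : ‖S - T‖ ≤ μ) :
    gap (LinearMap.range (S : F →ₗ[ℂ] E)) (LinearMap.range (T : F →ₗ[ℂ] E)) ≤ μ / c := by
  have hμ0 : 0 ≤ μ := (norm_nonneg (S - T)).trans hμ
  refine gap_le_of_forall_exists_norm_sub_le (div_nonneg hμ0 hc.le) fun y hy => ?_
  obtain ⟨x, hx, rfl⟩ := hD hy
  refine ⟨T x, ⟨x, rfl⟩, ?_⟩
  calc ‖S x - T x‖ ≤ μ * ‖x‖ := (S - T).le_of_opNorm_le hμ x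
    _ = μ / c * (c * ‖x‖) := by field_simp
    _ ≤ μ / c * ‖S x‖ := by gcongr; exact hlow x hx

end

theorem gap_range_le_of_perturbation_general {H K : Type*}
    [NormedAddCommGroup H] [InnerProductSpace ℂ H] [CompleteSpace H]
    [NormedAddCommGroup K] [InnerProductSpace ℂ K] [CompleteSpace K]
    {I : Type*} (TA TB : H →L[ℂ] lp (fun _ : I => K) 2)
    (HA HB : Submodule ℂ H)
    (hHA : HA = (LinearMap.range (adjoint TA : lp (fun _ : I => K) 2 →ₗ[ℂ] H)).topologicalClosure)
    (hHB : HB = (LinearMap.range (adjoint TB : lp (fun _ : I => K) 2 →ₗ[ℂ] H)).topologicalClosure)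
    (α : ℝ)
    (hframe : ∀ x ∈ HA, α * ‖x‖ ^ 2 ≤ ‖TA x‖ ^ 2)
    (μ : ℝ) (hμ : ‖TA - TB‖ ≤ μ) (hμα : μ < Real.sqrt α)
    (hΔ : max (gap HA HB) (gap HB HA) < 1) :
    max (gap (LinearMap.range (TA : H →ₗ[ℂ] lp (fun _ : I => K) 2))
          (LinearMap.range (TB : H →ₗ[ℂ] lp (fun _ : I => K) 2)))
        (gap (LinearMap.range (TB : H →ₗ[ℂ] lp (fun _ : I => K) 2))
          (LinearMap.range (TA : H →ₗ[ℂ] lp (fun _ : I => K) 2))) ≤ μ / (Real.sqrt α - μ) := by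
  rw [← orthogonal_ker] at hHA hHB
  subst hHA hHB
  have hc : 0 < Real.sqrt α - μ := sub_pos.mpr hμα
  have hμ0 : 0 ≤ μ := (norm_nonneg (TA - TB)).trans hμ
  have hlowA : ∀ x ∈ (LinearMap.ker (TA : H →ₗ[ℂ] lp (fun _ : I => K) 2))ᗮ,
      Real.sqrt α * ‖x‖ ≤ ‖TA x‖ := fun x hx => by
    simpa [Real.sqrt_mul' α (sq_nonneg ‖x‖)] using Real.sqrt_le_sqrt (hframe x hx)
  refine max_le ?_ ?_
  · refine gap_range_le_div_of_norm_sub_le TA TB TA.range_le_map_orthogonal_ker hc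
      (fun x hx => ?_) hμ
    exact (mul_le_mul_of_nonneg_right (sub_le_self _ hμ0) (norm_nonneg x)).trans (hlowA x hx)
  · exact gap_range_le_div_of_norm_sub_le TB TA
      (TB.range_le_map_of_gap_lt_one ((le_max_right _ _).trans_lt hΔ)) hc
      (fun x hx => sub_mul_norm_le_norm_apply (hlowA x hx) hμ) (by rwa [norm_sub_rev])

/-- If `A` is an operator-valued frame sequence with lower frame bound `α` and `B` is a
`μ`-perturbation of `A` with `μ < √α` and `Δ(H_A,H_B) < 1`, then
`Δ(ran T_A, ran T_B) ≤ μ/(√α - μ)`. -/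
theorem gap_range_le_of_perturbation {H K : Type*}
    [NormedAddCommGroup H] [InnerProductSpace ℂ H] [CompleteSpace H]
    [NormedAddCommGroup K] [InnerProductSpace ℂ K] [CompleteSpace K]
    {I : Type*} [Countable I] (TA TB : H →L[ℂ] lp (fun _ : I => K) 2)
    (HA HB : Submodule ℂ H)
    (hHA : HA = (LinearMap.range (adjoint TA : lp (fun _ : I => K) 2 →ₗ[ℂ] H)).topologicalClosure)
    (hHB : HB = (LinearMap.range (adjoint TB : lp (fun _ : I => K) 2 →ₗ[ℂ] H)).topologicalClosure)
    (α : ℝ) (hα : 0 < α)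
    (hframe : ∀ x ∈ HA, α * ‖x‖ ^ 2 ≤ ‖TA x‖ ^ 2)
    (μ : ℝ) (hμ : ‖TA - TB‖ ≤ μ) (hμα : μ < Real.sqrt α)
    (hΔ : max (gap HA HB) (gap HB HA) < 1) :
    max (gap (LinearMap.range (TA : H →ₗ[ℂ] lp (fun _ : I => K) 2))
          (LinearMap.range (TB : H →ₗ[ℂ] lp (fun _ : I => K) 2)))
        (gap (LinearMap.range (TB : H →ₗ[ℂ] lp (fun _ : I => K) 2))
          (LinearMap.range (TA : H →ₗ[ℂ] lp (fun _ : I => K) 2))) ≤ μ / (Real.sqrt α - μ) :=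
  gap_range_le_of_perturbation_general TA TB HA HB hHA hHB α hframe μ hμ hμα hΔ
end
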